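/- The Hasse diagram of the Tamari poset on planar binary trees of degree n is a regular graph of degree n−1: each tree of degree n is involved in exactly n−1 covering relations (as lower or upper element). -/

import Mathlib

/-- Planar binary trees: a leaf `∘` or an ordered pair of planar binary trees. -/
inductive PBT : Type
  | leaf : PBT
  | node : PBT → PBT → PBT
deriving DecidableEq

namespace PBT

/-- The degree: the number of internal vertices. -/
def deg : PBT → ℕ
  | leaf => 0
  | node l r => deg l + deg r + 1

/-- The over product `x/y`: graft the root of `x` onto the leftmost leaf of `y`. -/
def overProd (x : PBT) : PBT → PBT
  | leaf => x
  | node l r => node (overProd x l) r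

/-- The under product `x\y`: graft the root of `y` onto the rightmost leaf of `x`. -/
def under : PBT → PBT → PBT
  | leaf, y => y
  | node l r, y => node l (under r y)

/-- Left-right reversal: swap the two subtrees at every internal vertex. -/
def rev : PBT → PBT
  | leaf => leaf
  | node l r => node (rev r) (rev l)

/-- `move x y` : `y` is obtained from `x` by one elementary Tamari move,
replacing a subtree `(a (b c))` by `((a b) c)` (a right rotation, going down). -/
inductive move : PBT → PBT → Prop
  | rot (a b c : PBT) : move (node a (node b c)) (node (node a b) c)
  | left {a a' : PBT} (b : PBT) : move a a' → move (node a b) (node a' b)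
  | right (a : PBT) {b b' : PBT} : move b b' → move (node a b) (node a b')

/-- The Tamari order: `x ≤ y` iff `x` is obtained from `y` by a sequence of
elementary moves. -/
def tle (x y : PBT) : Prop := Relation.ReflTransGen move y x

/-- The left comb of degree `n`. -/
def leftComb : ℕ → PBT
  | 0 => leaf
  | n+1 => node (leftComb n) leaf

/-- The right comb of degree `n`. -/
def rightComb : ℕ → PBT
  | 0 => leaf
  | n+1 => node leaf (rightComb n)

end PBT

/-!
A covering relation of `t` is a rotation at an edge of `t` between two internal vertices: at
an edge to a right child it gives the lower cover `(a (b c)) ↦ ((a b) c)`, at an edge to a left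
child the upper cover `((a b) c) ↦ (a (b c))`. Every internal vertex except the root is the lower
end of exactly one such edge, so a tree of degree `n` has `n - 1` of them.
-/

namespace PBT

def Adj (t p : PBT) : Prop := move t p ∨ move p t

theorem move.deg_eq {x y : PBT} (h : move x y) : x.deg = y.deg := by
  induction h <;> simp only [deg] <;> omega

theorem move.ne {x y : PBT} (h : move x y) : x ≠ y := by
  induction h with
  | rot a b c =>
    intro h
    have := congrArg deg (node.inj h).1
    simp only [deg] at this
    omega
  | left b _ ih => simpa using ih
  | right a _ ih => simpa using ih

theorem Adj.deg_eq {t p : PBT} (h : Adj t p) : p.deg = t.deg :=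
  h.elim (fun h => h.deg_eq.symm) move.deg_eq

theorem Adj.ne {t p : PBT} (h : Adj t p) : p ≠ t :=
  h.elim (fun h => h.ne.symm) move.ne

theorem move_node_iff {l r p : PBT} : move (node l r) p ↔
    (∃ b c, r = node b c ∧ p = node (node l b) c) ∨ (∃ l', move l l' ∧ p = node l' r) ∨
      ∃ r', move r r' ∧ p = node l r' := by
  constructor
  · rintro (_ | ⟨_, h⟩ | ⟨_, h⟩) <;> simp_all
  · rintro (⟨b, c, rfl, rfl⟩ | ⟨l', h, rfl⟩ | ⟨r', h, rfl⟩)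
    exacts [.rot l b c, .left r h, .right l h]

theorem move_to_node_iff {l r p : PBT} : move p (node l r) ↔
    (∃ a b, l = node a b ∧ p = node a (node b r)) ∨ (∃ l', move l' l ∧ p = node l' r) ∨
      ∃ r', move r' r ∧ p = node l r' := by
  constructor
  · rintro (_ | ⟨_, h⟩ | ⟨_, h⟩) <;> simp_all
  · rintro (⟨a, b, rfl, rfl⟩ | ⟨l', h, rfl⟩ | ⟨r', h, rfl⟩)
    exacts [.rot a b r, .left r h, .right l h]

def rootUpper : PBT → PBT → List PBT
  | node a b, r => [node a (node b r)]
  | leaf, _ => []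

def rootLower : PBT → PBT → List PBT
  | l, node b c => [node (node l b) c]
  | _, leaf => []

theorem mem_rootUpper {l r p : PBT} :
    p ∈ rootUpper l r ↔ ∃ a b, l = node a b ∧ p = node a (node b r) := by
  cases l <;> simp [rootUpper]

theorem mem_rootLower {l r p : PBT} :
    p ∈ rootLower l r ↔ ∃ b c, r = node b c ∧ p = node (node l b) c := by
  cases r <;> simp [rootLower]

theorem length_rootUpper (l r : PBT) : (rootUpper l r).length = min l.deg 1 := by
  cases l <;> simp [rootUpper, deg]

theorem length_rootLower (l r : PBT) : (rootLower l r).length = min r.deg 1 := by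
  cases r <;> simp [rootLower, deg]

def neighbors : PBT → List PBT
  | leaf => []
  | node l r => rootUpper l r ++ rootLower l r ++
      (neighbors l).map (node · r) ++ (neighbors r).map (node l)

theorem mem_neighbors {t p : PBT} : p ∈ neighbors t ↔ Adj t p := by
  induction t generalizing p with
  | leaf =>
    simp only [neighbors, List.not_mem_nil, false_iff]
    rintro (h | h) <;> cases h
  | node l r ihl ihr =>
    simp only [neighbors, List.mem_append, List.mem_map, mem_rootUpper, mem_rootLower, ihl, ihr,
      Adj, move_node_iff, move_to_node_iff]
    grind

theorem length_neighbors (t : PBT) : (neighbors t).length = t.deg - 1 := by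
  induction t with
  | leaf => rfl
  | node l r ihl ihr =>
    simp only [neighbors, List.length_append, List.length_map, length_rootUpper,
      length_rootLower, ihl, ihr, deg]
    omega

theorem nodup_neighbors (t : PBT) : (neighbors t).Nodup := by
  induction t with
  | leaf => exact List.nodup_nil
  | node l r ihl ihr =>
    have hl : ∀ x ∈ neighbors l, x.deg = l.deg ∧ x ≠ l := fun x hx =>
      ⟨(mem_neighbors.1 hx).deg_eq, (mem_neighbors.1 hx).ne⟩
    simp only [neighbors, List.nodup_append, List.mem_append, mem_rootUpper, mem_rootLower,
      List.mem_map]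
    refine ⟨⟨⟨?_, ?_, ?_⟩, ihl.map fun _ _ h => (node.inj h).1, ?_⟩,
      ihr.map fun _ _ h => (node.inj h).2, ?_⟩
    · cases l <;> simp [rootUpper]
    · cases r <;> simp [rootLower]
    -- The four kinds of neighbours differ in their left subtree: its degree drops for the upper
    -- root rotation and rises for the lower one; a move inside `l` keeps the degree but changes
    -- `l`, a move inside `r` keeps `l`.
    · rintro _ ⟨a, b, rfl, rfl⟩ _ ⟨b', c, rfl, rfl⟩ h
      grind [deg]
    · rintro _ (⟨a, b, rfl, rfl⟩ | ⟨b', c, rfl, rfl⟩) _ ⟨x, hx, rfl⟩ h <;> grind [deg]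
    · rintro _ ((⟨a, b, rfl, rfl⟩ | ⟨b', c, rfl, rfl⟩) | ⟨x, hx, rfl⟩) _ ⟨y, hy, rfl⟩ h <;>
        grind [deg]

theorem card_adj (t : PBT) : Nat.card {p // Adj t p} = t.deg - 1 := by
  rw [← length_neighbors, ← List.toFinset_card_of_nodup (nodup_neighbors t),
    ← Nat.card_eq_finsetCard]
  exact Nat.card_congr <| Equiv.subtypeEquivRight fun _ => by rw [List.mem_toFinset, mem_neighbors]

end PBT

/-- The Hasse diagram of the Tamari poset on trees of degree `n` is regular of
degree `n - 1`: each tree is involved in exactly `n - 1` covering relations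
(elementary moves), as lower or upper element. -/
theorem stmt7 (n : ℕ) (t : PBT) (h : t.deg = n) :
    Nat.card {p : PBT // PBT.move t p ∨ PBT.move p t} = n - 1 :=
  h ▸ PBT.card_adj t
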